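/- Auxiliary parameter-Lipschitz bounds for γ and z. Consider the ResNet with input ‖x‖₂ ≤ B and activation satisfying the stated regularity conditions, and define γ^{(ℓ)}(θ) = α·(σ_v·σ_w/√n)·diag{φ'(g^{(ℓ)})}·V^{(ℓ)ᵀ}·δ^{(ℓ)}(θ) and z^{(ℓ)}(θ) = α·σ_v·φ(g^{(ℓ)}), where δ^{(ℓ)}(θ) = ∇_{x^{(ℓ)}} f. There exists a constant K depending only on L, α, σ_v, σ_w, C_φ, B, and d (and not on n) such that for all parameter vectors θ, θ̃ both satisfying the spectral bounds, and every ℓ ∈ {1,…,L}: ‖γ^{(ℓ)}(θ) − γ^{(ℓ)}(θ̃)‖₂ ≤ K·‖θ − θ̃‖₂ and ‖z^{(ℓ)}(θ) − z^{(ℓ)}(θ̃)‖₂ ≤ K·‖θ − θ̃‖₂, where ‖θ − θ̃‖₂ is the Euclidean norm of the difference of the full (vectorized) parameter vectors. -/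

import Mathlib

open MeasureTheory ProbabilityTheory Filter

noncomputable section

/-- Index type for all ResNet parameters: w^{(L+1)}, {W^{(ℓ)}}, {V^{(ℓ)}}, U. -/
abbrev ParamIdx (n L d : ℕ) : Type :=
  (Fin n) ⊕ (Fin L × Fin n × Fin n) ⊕ (Fin L × Fin n × Fin n) ⊕ (Fin n × Fin d)

/-- The full (vectorized) parameter vector. -/
abbrev Params (n L d : ℕ) : Type := ParamIdx n L d → ℝ

/-- Last-layer weight vector w^{(L+1)}. -/
def wOut {n L d : ℕ} (θ : Params n L d) : Fin n → ℝ := fun i => θ (Sum.inl i)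

/-- W^{(ℓ)} for ℓ = 1,…,L (zero outside this range). -/
def Wmat {n L d : ℕ} (θ : Params n L d) (ℓ : ℕ) : Matrix (Fin n) (Fin n) ℝ :=
  if h : 1 ≤ ℓ ∧ ℓ ≤ L then
    Matrix.of fun i j => θ (Sum.inr (Sum.inl (⟨ℓ - 1, by omega⟩, i, j)))
  else 0

/-- V^{(ℓ)} for ℓ = 1,…,L (zero outside this range). -/
def Vmat {n L d : ℕ} (θ : Params n L d) (ℓ : ℕ) : Matrix (Fin n) (Fin n) ℝ :=
  if h : 1 ≤ ℓ ∧ ℓ ≤ L then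
    Matrix.of fun i j => θ (Sum.inr (Sum.inr (Sum.inl (⟨ℓ - 1, by omega⟩, i, j))))
  else 0

/-- Input lifting matrix U. -/
def Umat {n L d : ℕ} (θ : Params n L d) : Matrix (Fin n) (Fin d) ℝ :=
  Matrix.of fun i j => θ (Sum.inr (Sum.inr (Sum.inr (i, j))))

/-- Euclidean (ℓ²) norm of a finite vector. -/
def l2norm {k : ℕ} (v : Fin k → ℝ) : ℝ := Real.sqrt (∑ i, (v i) ^ 2)

/-- Euclidean norm of a full parameter vector. -/
def paramNorm {n L d : ℕ} (θ : Params n L d) : ℝ := Real.sqrt (∑ i, (θ i) ^ 2)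

/-- Spectral (operator) norm of a matrix. -/
def specNorm {m k : ℕ} (A : Matrix (Fin m) (Fin k) ℝ) : ℝ :=
  sSup ((fun v => l2norm (A.mulVec v)) '' {v | l2norm v ≤ 1})

/-- Smallest singular value of a matrix. -/
def singMin {m k : ℕ} (A : Matrix (Fin m) (Fin k) ℝ) : ℝ :=
  sInf ((fun v => l2norm (A.mulVec v)) '' {v | l2norm v = 1})

/-- Frobenius norm of a matrix. -/
def frobNorm {m k : ℕ} (A : Matrix (Fin m) (Fin k) ℝ) : ℝ :=
  Real.sqrt (∑ i, ∑ j, (A i j) ^ 2)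

/-- Layer activations x^{(ℓ)} of the ResNet. -/
def xvec {n L d : ℕ} (φ : ℝ → ℝ) (α σv σw : ℝ) (θ : Params n L d) (x : Fin d → ℝ) :
    ℕ → Fin n → ℝ
  | 0 => (Real.sqrt d)⁻¹ • (Umat θ).mulVec x
  | ℓ + 1 =>
      xvec φ α σv σw θ x ℓ +
        (α * σv / Real.sqrt n) • (Vmat θ (ℓ + 1)).mulVec
          (fun i => φ ((σw / Real.sqrt n) *
              (Wmat θ (ℓ + 1)).mulVec (xvec φ α σv σw θ x ℓ) i))

/-- Pre-activations g^{(ℓ)} of the ResNet (meaningful for ℓ = 1,…,L). -/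
def gvec {n L d : ℕ} (φ : ℝ → ℝ) (α σv σw : ℝ) (θ : Params n L d) (x : Fin d → ℝ)
    (ℓ : ℕ) : Fin n → ℝ :=
  (σw / Real.sqrt n) • (Wmat θ ℓ).mulVec (xvec φ α σv σw θ x (ℓ - 1))

/-- The ResNet output f(x;θ). -/
def fnet {n L d : ℕ} (φ : ℝ → ℝ) (α σv σw : ℝ) (θ : Params n L d) (x : Fin d → ℝ) : ℝ :=
  (σw / Real.sqrt n) * ∑ i, wOut θ i * xvec φ α σv σw θ x L i

/-- The i.i.d. standard Gaussian initialization measure on the parameters. -/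
def initMeasure (n L d : ℕ) : Measure (Params n L d) :=
  Measure.pi fun _ => gaussianReal 0 1

/-- Standard Gaussian on ℝ². -/
def stdGauss2 : Measure (ℝ × ℝ) := (gaussianReal 0 1).prod (gaussianReal 0 1)

/-- The centered bivariate Gaussian N(0,Σ) for Σ = [[K11,K12],[K12,K22]] positive
semidefinite, realized via the Cholesky factorization. -/
def biGauss (K11 K12 K22 : ℝ) : Measure (ℝ × ℝ) :=
  stdGauss2.map (fun z => (Real.sqrt K11 * z.1,
    (K12 / Real.sqrt K11) * z.1 + Real.sqrt (K22 - K12 ^ 2 / K11) * z.2))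

/-- T(Σ) = E_{(u,v)∼N(0,Σ)}[φ(u)φ(v)]. -/
def TT (φ : ℝ → ℝ) (K11 K12 K22 : ℝ) : ℝ :=
  ∫ uv, φ uv.1 * φ uv.2 ∂(biGauss K11 K12 K22)

/-- Ṫ(Σ) = E_{(u,v)∼N(0,Σ)}[φ'(u)φ'(v)]. -/
def TTdot (φ : ℝ → ℝ) (K11 K12 K22 : ℝ) : ℝ :=
  ∫ uv, deriv φ uv.1 * deriv φ uv.2 ∂(biGauss K11 K12 K22)

/-- The limiting GP kernels: `Kker … ℓ x y` is K^{(ℓ+1)}(x,y); in particular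
`Kker … 0 x y = K^{(1)}(x,y) = (σ_w²/d)·xᵀy` and `Kker … L x y = K^{(L+1)}(x,y)`. -/
def Kker (φ : ℝ → ℝ) (α σv σw : ℝ) {d : ℕ} : ℕ → (Fin d → ℝ) → (Fin d → ℝ) → ℝ
  | 0 => fun x y => σw ^ 2 / d * ∑ i, x i * y i
  | ℓ + 1 => fun x y =>
      Kker φ α σv σw ℓ x y + α ^ 2 * σv ^ 2 * σw ^ 2 *
        TT φ (Kker φ α σv σw ℓ x x) (Kker φ α σv σw ℓ x y) (Kker φ α σv σw ℓ y y)


/-- The spectral bounds on a parameter vector: ‖w^{(L+1)}‖₂ ≤ 2√n, ‖U‖ ≤ √d + 2√n, and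
‖W^{(ℓ)}‖, ‖V^{(ℓ)}‖ ≤ 3√n for ℓ = 1,…,L. -/
def SpectralBounds {n L d : ℕ} (θ : Params n L d) : Prop :=
  l2norm (wOut θ) ≤ 2 * Real.sqrt n ∧
  specNorm (Umat θ) ≤ Real.sqrt d + 2 * Real.sqrt n ∧
  ∀ ℓ : ℕ, 1 ≤ ℓ → ℓ ≤ L →
    specNorm (Wmat θ ℓ) ≤ 3 * Real.sqrt n ∧ specNorm (Vmat θ ℓ) ≤ 3 * Real.sqrt n

/-- Auxiliary downward recursion: `deltaAux … k` is δ^{(L−k)}, with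
δ^{(L)} = (σ_w/√n)·w^{(L+1)} and
δ^{(ℓ)} = (I + α(σ_w/√n)W^{(ℓ+1)ᵀ}·diag{φ'(g^{(ℓ+1)})}·(σ_v/√n)V^{(ℓ+1)ᵀ})·δ^{(ℓ+1)}. -/
def deltaAux {n L d : ℕ} (φ : ℝ → ℝ) (α σv σw : ℝ) (θ : Params n L d) (x : Fin d → ℝ) :
    ℕ → Fin n → ℝ
  | 0 => (σw / Real.sqrt n) • wOut θ
  | k + 1 =>
      deltaAux φ α σv σw θ x k +
        (α * σw * σv / (n : ℝ)) •
          ((Wmat θ (L - k)).transpose *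
              Matrix.diagonal (fun i => deriv φ (gvec φ α σv σw θ x (L - k) i)) *
              (Vmat θ (L - k)).transpose).mulVec (deltaAux φ α σv σw θ x k)

/-- δ^{(ℓ)} = ∇_{x^{(ℓ)}} f, for ℓ = 0,…,L. -/
def deltaVec {n L d : ℕ} (φ : ℝ → ℝ) (α σv σw : ℝ) (θ : Params n L d) (x : Fin d → ℝ)
    (ℓ : ℕ) : Fin n → ℝ :=
  deltaAux φ α σv σw θ x (L - ℓ)

/-- γ^{(ℓ)}(θ) = α·(σ_vσ_w/√n)·diag{φ'(g^{(ℓ)})}·V^{(ℓ)ᵀ}·δ^{(ℓ)}(θ). -/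
def gammaVec {n L d : ℕ} (φ : ℝ → ℝ) (α σv σw : ℝ) (θ : Params n L d) (x : Fin d → ℝ)
    (ℓ : ℕ) : Fin n → ℝ :=
  (α * σv * σw / Real.sqrt n) •
    (Matrix.diagonal (fun i => deriv φ (gvec φ α σv σw θ x ℓ i)) *
        (Vmat θ ℓ).transpose).mulVec (deltaVec φ α σv σw θ x ℓ)

/-- z^{(ℓ)}(θ) = α·σ_v·φ(g^{(ℓ)}). -/
def zVec {n L d : ℕ} (φ : ℝ → ℝ) (α σv σw : ℝ) (θ : Params n L d) (x : Fin d → ℝ)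
    (ℓ : ℕ) : Fin n → ℝ :=
  fun i => α * σv * φ (gvec φ α σv σw θ x ℓ i)

/-!
Everything is propagated layer by layer with constants that do not depend on the width `n`.
Under the spectral bounds each weight matrix scaled by `1/√n` has operator norm at most `3`, and
a difference of two parameter blocks has operator norm at most its Frobenius norm, hence at most
`‖θ - θ'‖`. Splitting `A v - A' v' = (A - A') v + A' (v - v')` at every layer, a forward
induction gives `‖x^{(ℓ)}‖ = O(√n)` and `‖x^{(ℓ)}(θ) - x^{(ℓ)}(θ')‖ = O(‖θ - θ'‖)`, hence the
bounds for `g^{(ℓ)}` and `z^{(ℓ)}`; a backward induction gives `‖δ^{(ℓ)}‖ = O(1)` and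
`‖δ^{(ℓ)}(θ) - δ^{(ℓ)}(θ')‖ = O(‖θ - θ'‖)`, hence the bound for `γ^{(ℓ)}`. Both inductions have
the shape `a (k + 1) ≤ ρ a k + ρ ^ k c` with `ρ = 1 + 9 α σ_v σ_w C_φ`.
-/

open Matrix

section EuclideanNorm

variable {k m : ℕ}

theorem l2norm_eq_norm (v : Fin k → ℝ) : l2norm v = ‖WithLp.toLp 2 v‖ := by
  simp [l2norm, EuclideanSpace.norm_eq, sq_abs]

theorem l2norm_nonneg (v : Fin k → ℝ) : 0 ≤ l2norm v := Real.sqrt_nonneg _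

theorem l2norm_add_le (u v : Fin k → ℝ) : l2norm (u + v) ≤ l2norm u + l2norm v := by
  simpa only [l2norm_eq_norm, WithLp.toLp_add] using norm_add_le _ _

theorem l2norm_smul (c : ℝ) (v : Fin k → ℝ) : l2norm (c • v) = |c| * l2norm v := by
  simp only [l2norm_eq_norm, WithLp.toLp_smul, norm_smul, Real.norm_eq_abs]

theorem abs_le_l2norm (v : Fin k → ℝ) (i : Fin k) : |v i| ≤ l2norm v := by
  simpa only [l2norm_eq_norm, Real.norm_eq_abs] using PiLp.norm_apply_le (WithLp.toLp 2 v) i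

theorem l2norm_of_isEmpty [IsEmpty (Fin k)] (v : Fin k → ℝ) : l2norm v = 0 := by
  simp [l2norm]

theorem l2norm_le_mul_of_abs_le {u v : Fin k → ℝ} {c : ℝ} (hc : 0 ≤ c)
    (h : ∀ i, |u i| ≤ c * |v i|) : l2norm u ≤ c * l2norm v := by
  rw [l2norm, l2norm, ← Real.sqrt_sq hc, ← Real.sqrt_mul (sq_nonneg c), Finset.mul_sum]
  gcongr with i
  rw [← sq_abs (u i), ← sq_abs (v i), ← mul_pow]
  exact pow_le_pow_left₀ (abs_nonneg _) (h i) 2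

theorem l2norm_comp_le {f : ℝ → ℝ} {C : ℝ} (hC : 0 ≤ C) (hf : ∀ z, |f z| ≤ C * |z|)
    (v : Fin k → ℝ) : l2norm (fun i => f (v i)) ≤ C * l2norm v :=
  l2norm_le_mul_of_abs_le hC fun i => hf (v i)

theorem l2norm_comp_sub_comp_le {f : ℝ → ℝ} {C : ℝ} (hC : 0 ≤ C)
    (hf : ∀ z z', |f z - f z'| ≤ C * |z - z'|) (v v' : Fin k → ℝ) :
    l2norm ((fun i => f (v i)) - fun i => f (v' i)) ≤ C * l2norm (v - v') :=
  l2norm_le_mul_of_abs_le hC fun i => hf (v i) (v' i)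

end EuclideanNorm

section MatrixNorms

open scoped Matrix.Norms.L2Operator

variable {k m : ℕ}

theorem specNorm_eq_l2_opNorm (A : Matrix (Fin m) (Fin k) ℝ) : specNorm A = ‖A‖ := by
  rw [l2_opNorm_def, ← ContinuousLinearMap.sSup_unitClosedBall_eq_norm, specNorm]
  have hball : Metric.closedBall (0 : EuclideanSpace ℝ (Fin k)) 1 =
      WithLp.toLp 2 '' {v | l2norm v ≤ 1} := by
    ext w
    simp only [Metric.mem_closedBall, dist_zero_right, Set.mem_image, Set.mem_ofPred_eq,
      l2norm_eq_norm]
    exact ⟨fun hw => ⟨w.ofLp, hw, rfl⟩, by rintro ⟨v, hv, rfl⟩; exact hv⟩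
  rw [hball, Set.image_image]
  simp [l2norm_eq_norm]

theorem l2norm_mulVec_le (A : Matrix (Fin m) (Fin k) ℝ) (v : Fin k → ℝ) :
    l2norm (A *ᵥ v) ≤ specNorm A * l2norm v := by
  rw [l2norm_eq_norm, l2norm_eq_norm, specNorm_eq_l2_opNorm]
  exact A.l2_opNorm_mulVec (WithLp.toLp 2 v)

@[simp]
theorem specNorm_zero : specNorm (0 : Matrix (Fin m) (Fin k) ℝ) = 0 := by
  rw [specNorm_eq_l2_opNorm, norm_zero]

theorem specNorm_transpose (A : Matrix (Fin m) (Fin k) ℝ) : specNorm Aᵀ = specNorm A := by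
  rw [specNorm_eq_l2_opNorm, specNorm_eq_l2_opNorm, ← conjTranspose_eq_transpose_of_trivial,
    l2_opNorm_conjTranspose]

theorem specNorm_diagonal_le {a : Fin k → ℝ} {c : ℝ} (hc : 0 ≤ c) (ha : ∀ i, |a i| ≤ c) :
    specNorm (diagonal a) ≤ c := by
  rw [specNorm_eq_l2_opNorm, l2_opNorm_diagonal]
  exact (pi_norm_le_iff_of_nonneg hc).2 ha

theorem l2norm_mulVec_le_frobNorm (A : Matrix (Fin m) (Fin k) ℝ) (v : Fin k → ℝ) :
    l2norm (A *ᵥ v) ≤ frobNorm A * l2norm v := by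
  rw [l2norm, l2norm, frobNorm, ← Real.sqrt_mul (by positivity), Finset.sum_mul]
  gcongr with i
  exact Finset.sum_mul_sq_le_sq_mul_sq Finset.univ (A i) v

theorem specNorm_le_frobNorm (A : Matrix (Fin m) (Fin k) ℝ) : specNorm A ≤ frobNorm A := by
  rw [specNorm_eq_l2_opNorm, l2_opNorm_def]
  refine ContinuousLinearMap.opNorm_le_bound _ (Real.sqrt_nonneg _) fun v => ?_
  have h := l2norm_mulVec_le_frobNorm A v.ofLp
  rwa [l2norm_eq_norm, l2norm_eq_norm, WithLp.toLp_ofLp] at h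

theorem l2norm_mulVec_le_of_specNorm_le {A : Matrix (Fin m) (Fin k) ℝ} {s : ℝ}
    (hA : specNorm A ≤ s) (v : Fin k → ℝ) : l2norm (A *ᵥ v) ≤ s * l2norm v :=
  (l2norm_mulVec_le A v).trans (mul_le_mul_of_nonneg_right hA (l2norm_nonneg v))

theorem l2norm_mulVec_sub_mulVec_le {A A' : Matrix (Fin m) (Fin k) ℝ} {t s : ℝ}
    (hA : specNorm (A - A') ≤ t) (hA' : specNorm A' ≤ s) (v v' : Fin k → ℝ) :
    l2norm (A *ᵥ v - A' *ᵥ v') ≤ t * l2norm v + s * l2norm (v - v') := by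
  have hsplit : A *ᵥ v - A' *ᵥ v' = (A - A') *ᵥ v + A' *ᵥ (v - v') := by
    rw [sub_mulVec, mulVec_sub]; abel
  rw [hsplit]
  exact (l2norm_add_le _ _).trans (add_le_add (l2norm_mulVec_le_of_specNorm_le hA v)
    (l2norm_mulVec_le_of_specNorm_le hA' _))

theorem l2norm_diagonal_mul_transpose_mulVec_le {f : ℝ → ℝ} {C s : ℝ} (hC : 0 ≤ C)
    (hf : ∀ z, |f z| ≤ C) {V : Matrix (Fin k) (Fin m) ℝ} (hV : specNorm V ≤ s)
    (g : Fin m → ℝ) (δ : Fin k → ℝ) :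
    l2norm ((diagonal (fun i => f (g i)) * Vᵀ) *ᵥ δ) ≤ C * (s * l2norm δ) := by
  rw [← mulVec_mulVec]
  exact (l2norm_mulVec_le_of_specNorm_le (specNorm_diagonal_le hC fun i => hf _) _).trans
    (by gcongr; exact l2norm_mulVec_le_of_specNorm_le (by rwa [specNorm_transpose]) δ)

theorem l2norm_diagonal_mul_transpose_mulVec_sub_le {f : ℝ → ℝ} {C s t : ℝ} (hC : 0 ≤ C)
    (hf : ∀ z, |f z| ≤ C) (hf_lip : ∀ z z', |f z - f z'| ≤ C * |z - z'|)
    {V V' : Matrix (Fin k) (Fin m) ℝ} (hV : specNorm V ≤ s) (hV' : specNorm V' ≤ s)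
    (hVV' : specNorm (V - V') ≤ t) (g g' : Fin m → ℝ) (δ δ' : Fin k → ℝ) :
    l2norm ((diagonal (fun i => f (g i)) * Vᵀ) *ᵥ δ - (diagonal (fun i => f (g' i)) * V'ᵀ) *ᵥ δ')
      ≤ C * (s * l2norm (g - g') * l2norm δ + t * l2norm δ + s * l2norm (δ - δ')) := by
  have hVδ : l2norm (Vᵀ *ᵥ δ) ≤ s * l2norm δ :=
    l2norm_mulVec_le_of_specNorm_le (by rwa [specNorm_transpose]) δ
  have hVδ' : l2norm (Vᵀ *ᵥ δ - V'ᵀ *ᵥ δ') ≤ t * l2norm δ + s * l2norm (δ - δ') :=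
    l2norm_mulVec_sub_mulVec_le (by rwa [← transpose_sub, specNorm_transpose])
      (by rwa [specNorm_transpose]) δ δ'
  have hCg : 0 ≤ C * l2norm (g - g') := mul_nonneg hC (l2norm_nonneg _)
  have hD : specNorm (diagonal (fun i => f (g i)) - diagonal fun i => f (g' i)) ≤
      C * l2norm (g - g') := by
    rw [diagonal_sub]
    exact specNorm_diagonal_le hCg
      fun i => (hf_lip _ _).trans (by gcongr; exact abs_le_l2norm (g - g') i)
  rw [← mulVec_mulVec, ← mulVec_mulVec]
  refine (l2norm_mulVec_sub_mulVec_le hD (specNorm_diagonal_le hC fun i => hf _) _ _).trans ?_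
  calc C * l2norm (g - g') * l2norm (Vᵀ *ᵥ δ) + C * l2norm (Vᵀ *ᵥ δ - V'ᵀ *ᵥ δ')
      ≤ C * l2norm (g - g') * (s * l2norm δ) + C * (t * l2norm δ + s * l2norm (δ - δ')) := by
        gcongr
    _ = _ := by ring

end MatrixNorms

section ParameterBlocks

variable {n L d : ℕ}

theorem sum_sq_comp_le_of_injective {ι κ : Type*} [Fintype ι] [Fintype κ] (f : κ → ℝ)
    {e : ι → κ} (he : Function.Injective e) : ∑ i, f (e i) ^ 2 ≤ ∑ j, f j ^ 2 := by
  classical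
  rw [← Finset.sum_image (f := fun j => f j ^ 2) fun _ _ _ _ h => he h]
  exact Finset.sum_le_univ_sum_of_nonneg fun _ => sq_nonneg _

theorem paramNorm_nonneg (ψ : Params n L d) : 0 ≤ paramNorm ψ := Real.sqrt_nonneg _

theorem specNorm_le_paramNorm_of_injective {m k : ℕ} (ψ : Params n L d)
    {e : Fin m × Fin k → ParamIdx n L d} (he : Function.Injective e) :
    specNorm (Matrix.of fun i j => ψ (e (i, j))) ≤ paramNorm ψ := by
  refine (specNorm_le_frobNorm _).trans (Real.sqrt_le_sqrt ?_)
  simpa only [Matrix.of_apply, ← Fintype.sum_prod_type'] using sum_sq_comp_le_of_injective ψ he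

theorem l2norm_wOut_le_paramNorm (ψ : Params n L d) : l2norm (wOut ψ) ≤ paramNorm ψ :=
  Real.sqrt_le_sqrt (sum_sq_comp_le_of_injective ψ Sum.inl_injective)

theorem specNorm_Wmat_le_paramNorm (ψ : Params n L d) (ℓ : ℕ) :
    specNorm (Wmat ψ ℓ) ≤ paramNorm ψ := by
  unfold Wmat
  split_ifs with hℓ
  · exact specNorm_le_paramNorm_of_injective ψ
      (e := fun p => Sum.inr (Sum.inl (⟨ℓ - 1, by omega⟩, p.1, p.2)))
      fun a b h => by simpa [Prod.ext_iff] using h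
  · simpa using paramNorm_nonneg ψ

theorem specNorm_Vmat_le_paramNorm (ψ : Params n L d) (ℓ : ℕ) :
    specNorm (Vmat ψ ℓ) ≤ paramNorm ψ := by
  unfold Vmat
  split_ifs with hℓ
  · exact specNorm_le_paramNorm_of_injective ψ
      (e := fun p => Sum.inr (Sum.inr (Sum.inl (⟨ℓ - 1, by omega⟩, p.1, p.2))))
      fun a b h => by simpa [Prod.ext_iff] using h
  · simpa using paramNorm_nonneg ψ

theorem specNorm_Umat_le_paramNorm (ψ : Params n L d) : specNorm (Umat ψ) ≤ paramNorm ψ :=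
  specNorm_le_paramNorm_of_injective ψ (e := fun p => Sum.inr (Sum.inr (Sum.inr p)))
    fun a b h => by simpa using h

theorem wOut_sub (θ θ' : Params n L d) : wOut θ - wOut θ' = wOut (θ - θ') := rfl

theorem Wmat_sub (θ θ' : Params n L d) (ℓ : ℕ) : Wmat θ ℓ - Wmat θ' ℓ = Wmat (θ - θ') ℓ := by
  unfold Wmat
  split_ifs
  · ext; simp
  · simp

theorem Vmat_sub (θ θ' : Params n L d) (ℓ : ℕ) : Vmat θ ℓ - Vmat θ' ℓ = Vmat (θ - θ') ℓ := by
  unfold Vmat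
  split_ifs
  · ext; simp
  · simp

theorem Umat_sub (θ θ' : Params n L d) : Umat θ - Umat θ' = Umat (θ - θ') := by
  ext; simp [Umat]

/-- Valid for every `ℓ`, as `Wmat θ ℓ = 0` outside `1 ≤ ℓ ≤ L`; the layer recursions below
therefore run over all of `ℕ`. -/
theorem SpectralBounds.specNorm_Wmat_le {θ : Params n L d} (h : SpectralBounds θ) (ℓ : ℕ) :
    specNorm (Wmat θ ℓ) ≤ 3 * Real.sqrt n := by
  by_cases hℓ : 1 ≤ ℓ ∧ ℓ ≤ L
  · exact (h.2.2 ℓ hℓ.1 hℓ.2).1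
  · simp only [Wmat, dif_neg hℓ, specNorm_zero]; positivity

theorem SpectralBounds.specNorm_Vmat_le {θ : Params n L d} (h : SpectralBounds θ) (ℓ : ℕ) :
    specNorm (Vmat θ ℓ) ≤ 3 * Real.sqrt n := by
  by_cases hℓ : 1 ≤ ℓ ∧ ℓ ≤ L
  · exact (h.2.2 ℓ hℓ.1 hℓ.2).2
  · simp only [Vmat, dif_neg hℓ, specNorm_zero]; positivity

end ParameterBlocks

theorem le_pow_mul_add_of_le_mul_add {a : ℕ → ℝ} {ρ C c : ℝ} (hρ : 1 ≤ ρ) (hc : 0 ≤ c)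
    (h0 : a 0 ≤ C) (hs : ∀ k, a (k + 1) ≤ ρ * a k + ρ ^ k * c) (k : ℕ) :
    a k ≤ ρ ^ k * (C + k * c) := by
  induction k with
  | zero => simpa using h0
  | succ k ih =>
    have hρk : ρ ^ k * c ≤ ρ ^ (k + 1) * c :=
      mul_le_mul_of_nonneg_right (pow_le_pow_right₀ hρ k.le_succ) hc
    calc a (k + 1) ≤ ρ * a k + ρ ^ k * c := hs k
      _ ≤ ρ * (ρ ^ k * (C + k * c)) + ρ ^ (k + 1) * c := by gcongr
      _ = ρ ^ (k + 1) * (C + (k + 1 : ℕ) * c) := by push_cast; ring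

theorem pow_mul_add_le_pow_mul_add {ρ C c : ℝ} (hρ : 1 ≤ ρ) (hC : 0 ≤ C) (hc : 0 ≤ c)
    {k m : ℕ} (hkm : k ≤ m) : ρ ^ k * (C + k * c) ≤ ρ ^ m * (C + m * c) := by
  gcongr

theorem inv_sqrt_natCast_le_one (d : ℕ) : (Real.sqrt d)⁻¹ ≤ 1 := by
  rcases d.eq_zero_or_pos with rfl | hd
  · simp
  · exact inv_le_one_of_one_le₀ (Real.one_le_sqrt.2 (by exact_mod_cast hd))

section Forward

variable {n L d : ℕ} {φ : ℝ → ℝ} {α σv σw Cφ B : ℝ} {x : Fin d → ℝ} {θ θ' : Params n L d}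

theorem xvec_succ (ℓ : ℕ) :
    xvec φ α σv σw θ x (ℓ + 1) = xvec φ α σv σw θ x ℓ +
      (α * σv / Real.sqrt n) • Vmat θ (ℓ + 1) *ᵥ fun i => φ (gvec φ α σv σw θ x (ℓ + 1) i) :=
  rfl

theorem l2norm_gvec_le (hσw : 0 ≤ σw) (hn : 0 < n) (hθ : SpectralBounds θ) (ℓ : ℕ) :
    l2norm (gvec φ α σv σw θ x ℓ) ≤ 3 * σw * l2norm (xvec φ α σv σw θ x (ℓ - 1)) := by
  have hs : 0 < Real.sqrt n := Real.sqrt_pos.2 (by exact_mod_cast hn)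
  rw [gvec, l2norm_smul, abs_of_nonneg (by positivity)]
  calc σw / Real.sqrt n * l2norm (Wmat θ ℓ *ᵥ xvec φ α σv σw θ x (ℓ - 1))
      ≤ σw / Real.sqrt n * (3 * Real.sqrt n * l2norm (xvec φ α σv σw θ x (ℓ - 1))) := by
        gcongr; exact l2norm_mulVec_le_of_specNorm_le (hθ.specNorm_Wmat_le ℓ) _
    _ = 3 * σw * l2norm (xvec φ α σv σw θ x (ℓ - 1)) := by field_simp

theorem l2norm_xvec_zero_le (hB : 0 ≤ B) (hn : 0 < n) (hx : l2norm x ≤ B)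
    (hθ : SpectralBounds θ) : l2norm (xvec φ α σv σw θ x 0) ≤ 3 * B * Real.sqrt n := by
  have hs : 1 ≤ Real.sqrt n := Real.one_le_sqrt.2 (by exact_mod_cast hn)
  have hd := inv_sqrt_natCast_le_one d
  rw [xvec, l2norm_smul, abs_of_nonneg (by positivity)]
  calc (Real.sqrt d)⁻¹ * l2norm (Umat θ *ᵥ x)
      ≤ (Real.sqrt d)⁻¹ * ((Real.sqrt d + 2 * Real.sqrt n) * B) := by
        gcongr; exact (l2norm_mulVec_le_of_specNorm_le hθ.2.1 x).trans (by gcongr)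
    _ = ((Real.sqrt d)⁻¹ * Real.sqrt d + 2 * (Real.sqrt d)⁻¹ * Real.sqrt n) * B := by ring
    _ ≤ (1 + 2 * 1 * Real.sqrt n) * B := by gcongr; exact inv_mul_le_one
    _ ≤ 3 * B * Real.sqrt n := by nlinarith

theorem l2norm_xvec_succ_le (hα : 0 ≤ α) (hσv : 0 ≤ σv) (hσw : 0 ≤ σw) (hCφ : 0 ≤ Cφ)
    (hφ : ∀ z, |φ z| ≤ Cφ * |z|) (hn : 0 < n) (hθ : SpectralBounds θ) (ℓ : ℕ) :
    l2norm (xvec φ α σv σw θ x (ℓ + 1)) ≤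
      (1 + 9 * (α * σv * σw * Cφ)) * l2norm (xvec φ α σv σw θ x ℓ) := by
  have hs : 0 < Real.sqrt n := Real.sqrt_pos.2 (by exact_mod_cast hn)
  have hg : l2norm (gvec φ α σv σw θ x (ℓ + 1)) ≤ 3 * σw * l2norm (xvec φ α σv σw θ x ℓ) :=
    l2norm_gvec_le hσw hn hθ (ℓ + 1)
  have hp := (l2norm_comp_le hCφ hφ _).trans (mul_le_mul_of_nonneg_left hg hCφ)
  rw [xvec_succ]
  refine (l2norm_add_le _ _).trans ?_
  rw [l2norm_smul, abs_of_nonneg (by positivity)]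
  calc l2norm (xvec φ α σv σw θ x ℓ) + α * σv / Real.sqrt n *
        l2norm (Vmat θ (ℓ + 1) *ᵥ fun i => φ (gvec φ α σv σw θ x (ℓ + 1) i))
      ≤ l2norm (xvec φ α σv σw θ x ℓ) + α * σv / Real.sqrt n *
        (3 * Real.sqrt n * (Cφ * (3 * σw * l2norm (xvec φ α σv σw θ x ℓ)))) := by
        gcongr
        exact (l2norm_mulVec_le_of_specNorm_le (hθ.specNorm_Vmat_le _) _).trans (by gcongr)
    _ = (1 + 9 * (α * σv * σw * Cφ)) * l2norm (xvec φ α σv σw θ x ℓ) := by field_simp; ring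

theorem l2norm_xvec_le (hα : 0 ≤ α) (hσv : 0 ≤ σv) (hσw : 0 ≤ σw) (hCφ : 0 ≤ Cφ) (hB : 0 ≤ B)
    (hφ : ∀ z, |φ z| ≤ Cφ * |z|) (hn : 0 < n) (hx : l2norm x ≤ B) (hθ : SpectralBounds θ)
    (ℓ : ℕ) :
    l2norm (xvec φ α σv σw θ x ℓ) ≤ 3 * B * (1 + 9 * (α * σv * σw * Cφ)) ^ ℓ * Real.sqrt n := by
  have h := le_pow_mul_add_of_le_mul_add (a := fun k => l2norm (xvec φ α σv σw θ x k))
    (ρ := 1 + 9 * (α * σv * σw * Cφ)) (le_add_of_nonneg_right (by positivity)) le_rfl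
    (l2norm_xvec_zero_le hB hn hx hθ)
    (fun k => by simpa using l2norm_xvec_succ_le hα hσv hσw hCφ hφ hn hθ k) ℓ
  linarith

theorem l2norm_gvec_sub_le {X Y : ℝ} (hσw : 0 ≤ σw) (hn : 0 < n) (hθ' : SpectralBounds θ')
    {ℓ : ℕ} (hX : l2norm (xvec φ α σv σw θ x (ℓ - 1)) ≤ X * Real.sqrt n)
    (hY : l2norm (xvec φ α σv σw θ x (ℓ - 1) - xvec φ α σv σw θ' x (ℓ - 1)) ≤ Y) :
    l2norm (gvec φ α σv σw θ x ℓ - gvec φ α σv σw θ' x ℓ) ≤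
      σw * (X * paramNorm (θ - θ') + 3 * Y) := by
  have hs : 0 < Real.sqrt n := Real.sqrt_pos.2 (by exact_mod_cast hn)
  have hΔ := paramNorm_nonneg (θ - θ')
  rw [gvec, gvec, ← smul_sub, l2norm_smul, abs_of_nonneg (by positivity)]
  calc σw / Real.sqrt n * l2norm (Wmat θ ℓ *ᵥ xvec φ α σv σw θ x (ℓ - 1) -
        Wmat θ' ℓ *ᵥ xvec φ α σv σw θ' x (ℓ - 1))
      ≤ σw / Real.sqrt n * (paramNorm (θ - θ') * (X * Real.sqrt n) +
        3 * Real.sqrt n * Y) := by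
        gcongr
        refine (l2norm_mulVec_sub_mulVec_le (t := paramNorm (θ - θ')) ?_
          (hθ'.specNorm_Wmat_le ℓ) _ _).trans ?_
        · rw [Wmat_sub]; exact specNorm_Wmat_le_paramNorm _ _
        · gcongr
    _ = σw * (X * paramNorm (θ - θ') + 3 * Y) := by field_simp

theorem l2norm_xvec_succ_sub_le {X : ℝ} (hα : 0 ≤ α) (hσv : 0 ≤ σv) (hσw : 0 ≤ σw)
    (hCφ : 0 ≤ Cφ) (hφ : ∀ z, |φ z| ≤ Cφ * |z|)
    (hφ_lip : ∀ z z', |φ z - φ z'| ≤ Cφ * |z - z'|) (hn : 0 < n)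
    (hθ : SpectralBounds θ) (hθ' : SpectralBounds θ') {ℓ : ℕ}
    (hX : l2norm (xvec φ α σv σw θ x ℓ) ≤ X * Real.sqrt n) :
    l2norm (xvec φ α σv σw θ x (ℓ + 1) - xvec φ α σv σw θ' x (ℓ + 1)) ≤
      (1 + 9 * (α * σv * σw * Cφ)) * l2norm (xvec φ α σv σw θ x ℓ - xvec φ α σv σw θ' x ℓ) +
        6 * (α * σv * σw * Cφ) * X * paramNorm (θ - θ') := by
  have hs : 0 < Real.sqrt n := Real.sqrt_pos.2 (by exact_mod_cast hn)
  set Δ := paramNorm (θ - θ')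
  have hΔ : 0 ≤ Δ := paramNorm_nonneg _
  set e := l2norm (xvec φ α σv σw θ x ℓ - xvec φ α σv σw θ' x ℓ)
  set p := fun i => φ (gvec φ α σv σw θ x (ℓ + 1) i)
  set p' := fun i => φ (gvec φ α σv σw θ' x (ℓ + 1) i)
  have hg : l2norm (gvec φ α σv σw θ x (ℓ + 1)) ≤ 3 * σw * (X * Real.sqrt n) :=
    (l2norm_gvec_le hσw hn hθ _).trans (by gcongr; exact hX)
  have hp : l2norm p ≤ Cφ * (3 * σw * (X * Real.sqrt n)) :=
    (l2norm_comp_le hCφ hφ _).trans (by gcongr)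
  have hdp : l2norm (p - p') ≤ Cφ * (σw * (X * Δ + 3 * e)) :=
    (l2norm_comp_sub_comp_le hCφ hφ_lip _ _).trans
      (by gcongr; exact l2norm_gvec_sub_le hσw hn hθ' hX le_rfl)
  have hVp : l2norm (Vmat θ (ℓ + 1) *ᵥ p - Vmat θ' (ℓ + 1) *ᵥ p') ≤
      Δ * (Cφ * (3 * σw * (X * Real.sqrt n))) +
        3 * Real.sqrt n * (Cφ * (σw * (X * Δ + 3 * e))) := by
    refine (l2norm_mulVec_sub_mulVec_le (t := Δ) ?_ (hθ'.specNorm_Vmat_le _) _ _).trans ?_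
    · rw [Vmat_sub]; exact specNorm_Vmat_le_paramNorm _ _
    · gcongr
  have hsplit : xvec φ α σv σw θ x (ℓ + 1) - xvec φ α σv σw θ' x (ℓ + 1) =
      (xvec φ α σv σw θ x ℓ - xvec φ α σv σw θ' x ℓ) +
        (α * σv / Real.sqrt n) • (Vmat θ (ℓ + 1) *ᵥ p - Vmat θ' (ℓ + 1) *ᵥ p') := by
    rw [xvec_succ, xvec_succ, smul_sub]; abel
  rw [hsplit]
  refine (l2norm_add_le _ _).trans ?_
  rw [l2norm_smul, abs_of_nonneg (by positivity)]
  calc e + α * σv / Real.sqrt n * l2norm (Vmat θ (ℓ + 1) *ᵥ p - Vmat θ' (ℓ + 1) *ᵥ p')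
      ≤ e + α * σv / Real.sqrt n * (Δ * (Cφ * (3 * σw * (X * Real.sqrt n))) +
        3 * Real.sqrt n * (Cφ * (σw * (X * Δ + 3 * e)))) := by gcongr
    _ = (1 + 9 * (α * σv * σw * Cφ)) * e + 6 * (α * σv * σw * Cφ) * X * Δ := by
        field_simp; ring

theorem l2norm_xvec_sub_le (hα : 0 ≤ α) (hσv : 0 ≤ σv) (hσw : 0 ≤ σw) (hCφ : 0 ≤ Cφ)
    (hB : 0 ≤ B) (hφ : ∀ z, |φ z| ≤ Cφ * |z|) (hφ_lip : ∀ z z', |φ z - φ z'| ≤ Cφ * |z - z'|)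
    (hn : 0 < n) (hx : l2norm x ≤ B) (hθ : SpectralBounds θ) (hθ' : SpectralBounds θ')
    (ℓ : ℕ) :
    l2norm (xvec φ α σv σw θ x ℓ - xvec φ α σv σw θ' x ℓ) ≤
      (1 + 9 * (α * σv * σw * Cφ)) ^ ℓ * (B + ℓ * (18 * (α * σv * σw * Cφ) * B)) *
        paramNorm (θ - θ') := by
  set P := α * σv * σw * Cφ
  set Δ := paramNorm (θ - θ')
  have hΔ : 0 ≤ Δ := paramNorm_nonneg _
  have h0 : l2norm (xvec φ α σv σw θ x 0 - xvec φ α σv σw θ' x 0) ≤ B * Δ := by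
    rw [xvec, xvec, ← smul_sub, ← sub_mulVec, Umat_sub, l2norm_smul,
      abs_of_nonneg (by positivity)]
    calc (Real.sqrt d)⁻¹ * l2norm (Umat (θ - θ') *ᵥ x) ≤ 1 * (Δ * B) :=
          mul_le_mul (inv_sqrt_natCast_le_one d) ((l2norm_mulVec_le_of_specNorm_le
            (specNorm_Umat_le_paramNorm _) x).trans (by gcongr)) (l2norm_nonneg _) zero_le_one
      _ = B * Δ := by ring
  have h := le_pow_mul_add_of_le_mul_add
    (a := fun k => l2norm (xvec φ α σv σw θ x k - xvec φ α σv σw θ' x k))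
    (ρ := 1 + 9 * P) (c := 18 * P * B * Δ) (le_add_of_nonneg_right (by positivity))
    (by positivity) h0 (fun k => ?_) ℓ
  · calc _ ≤ _ := h
      _ = _ := by ring
  · refine (l2norm_xvec_succ_sub_le hα hσv hσw hCφ hφ hφ_lip hn hθ hθ'
      (l2norm_xvec_le hα hσv hσw hCφ hB hφ hn hx hθ k)).trans (le_of_eq ?_)
    ring

theorem l2norm_gvec_sub_le_of_le (hα : 0 ≤ α) (hσv : 0 ≤ σv) (hσw : 0 ≤ σw) (hCφ : 0 ≤ Cφ)
    (hB : 0 ≤ B) (hφ : ∀ z, |φ z| ≤ Cφ * |z|) (hφ_lip : ∀ z z', |φ z - φ z'| ≤ Cφ * |z - z'|)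
    (hn : 0 < n) (hx : l2norm x ≤ B) (hθ : SpectralBounds θ) (hθ' : SpectralBounds θ')
    {ℓ : ℕ} (hℓ : ℓ ≤ L) :
    l2norm (gvec φ α σv σw θ x ℓ - gvec φ α σv σw θ' x ℓ) ≤
      σw * (3 * B * (1 + 9 * (α * σv * σw * Cφ)) ^ L + 3 * ((1 + 9 * (α * σv * σw * Cφ)) ^ L *
        (B + L * (18 * (α * σv * σw * Cφ) * B)))) * paramNorm (θ - θ') := by
  have hρ : 1 ≤ 1 + 9 * (α * σv * σw * Cφ) := le_add_of_nonneg_right (by positivity)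
  have hΔ := paramNorm_nonneg (θ - θ')
  have hX : l2norm (xvec φ α σv σw θ x (ℓ - 1)) ≤
      3 * B * (1 + 9 * (α * σv * σw * Cφ)) ^ L * Real.sqrt n :=
    (l2norm_xvec_le hα hσv hσw hCφ hB hφ hn hx hθ (ℓ - 1)).trans (by gcongr; omega)
  have hY := (l2norm_xvec_sub_le hα hσv hσw hCφ hB hφ hφ_lip hn hx hθ hθ' (ℓ - 1)).trans
    (mul_le_mul_of_nonneg_right
      (pow_mul_add_le_pow_mul_add hρ hB (by positivity) (m := L) (by omega)) hΔ)
  exact (l2norm_gvec_sub_le hσw hn hθ' hX hY).trans (le_of_eq (by ring))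

end Forward

def backpropMatrix {n L d : ℕ} (φ : ℝ → ℝ) (α σv σw : ℝ) (θ : Params n L d)
    (x : Fin d → ℝ) (ℓ : ℕ) : Matrix (Fin n) (Fin n) ℝ :=
  (Wmat θ ℓ)ᵀ * diagonal (fun i => deriv φ (gvec φ α σv σw θ x ℓ i)) * (Vmat θ ℓ)ᵀ

section Backward

variable {n L d : ℕ} {φ : ℝ → ℝ} {α σv σw Cφ : ℝ} {x : Fin d → ℝ} {θ θ' : Params n L d}

theorem deltaAux_succ (k : ℕ) :
    deltaAux φ α σv σw θ x (k + 1) = deltaAux φ α σv σw θ x k +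
      (α * σw * σv / n) • backpropMatrix φ α σv σw θ x (L - k) *ᵥ deltaAux φ α σv σw θ x k :=
  rfl

theorem backpropMatrix_mulVec (ℓ : ℕ) (δ : Fin n → ℝ) :
    backpropMatrix φ α σv σw θ x ℓ *ᵥ δ = (Wmat θ ℓ)ᵀ *ᵥ
      ((diagonal (fun i => deriv φ (gvec φ α σv σw θ x ℓ i)) * (Vmat θ ℓ)ᵀ) *ᵥ δ) := by
  rw [backpropMatrix, Matrix.mul_assoc, ← mulVec_mulVec]

theorem l2norm_backpropMatrix_mulVec_le (hCφ : 0 ≤ Cφ) (hφ' : ∀ z, |deriv φ z| ≤ Cφ)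
    (hθ : SpectralBounds θ) (ℓ : ℕ) (δ : Fin n → ℝ) :
    l2norm (backpropMatrix φ α σv σw θ x ℓ *ᵥ δ) ≤ 9 * n * Cφ * l2norm δ := by
  rw [backpropMatrix_mulVec]
  refine (l2norm_mulVec_le_of_specNorm_le
    ((specNorm_transpose _).le.trans (hθ.specNorm_Wmat_le ℓ)) _).trans ?_
  calc 3 * Real.sqrt n * l2norm ((diagonal (fun i => deriv φ (gvec φ α σv σw θ x ℓ i)) *
        (Vmat θ ℓ)ᵀ) *ᵥ δ)
      ≤ 3 * Real.sqrt n * (Cφ * (3 * Real.sqrt n * l2norm δ)) := by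
        gcongr
        exact l2norm_diagonal_mul_transpose_mulVec_le hCφ hφ' (hθ.specNorm_Vmat_le ℓ) _ _
    _ = 9 * (Real.sqrt n * Real.sqrt n) * Cφ * l2norm δ := by ring
    _ = 9 * n * Cφ * l2norm δ := by rw [Real.mul_self_sqrt (Nat.cast_nonneg n)]

theorem l2norm_backpropMatrix_mulVec_sub_le (hCφ : 0 ≤ Cφ) (hφ' : ∀ z, |deriv φ z| ≤ Cφ)
    (hφ'_lip : ∀ z z', |deriv φ z - deriv φ z'| ≤ Cφ * |z - z'|) (hθ : SpectralBounds θ)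
    (hθ' : SpectralBounds θ') (ℓ : ℕ) (δ δ' : Fin n → ℝ) :
    l2norm (backpropMatrix φ α σv σw θ x ℓ *ᵥ δ - backpropMatrix φ α σv σw θ' x ℓ *ᵥ δ') ≤
      Cφ * (6 * Real.sqrt n * paramNorm (θ - θ') * l2norm δ + 9 * n *
        l2norm (gvec φ α σv σw θ x ℓ - gvec φ α σv σw θ' x ℓ) * l2norm δ +
          9 * n * l2norm (δ - δ')) := by
  set Δ := paramNorm (θ - θ')
  have hΔ : 0 ≤ Δ := paramNorm_nonneg _
  set u := (diagonal (fun i => deriv φ (gvec φ α σv σw θ x ℓ i)) * (Vmat θ ℓ)ᵀ) *ᵥ δ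
  set u' := (diagonal (fun i => deriv φ (gvec φ α σv σw θ' x ℓ i)) * (Vmat θ' ℓ)ᵀ) *ᵥ δ'
  have hu : l2norm u ≤ Cφ * (3 * Real.sqrt n * l2norm δ) :=
    l2norm_diagonal_mul_transpose_mulVec_le hCφ hφ' (hθ.specNorm_Vmat_le ℓ) _ _
  have hVV' : specNorm (Vmat θ ℓ - Vmat θ' ℓ) ≤ Δ := by
    rw [Vmat_sub]; exact specNorm_Vmat_le_paramNorm _ _
  have hdu := l2norm_diagonal_mul_transpose_mulVec_sub_le hCφ hφ' hφ'_lip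
    (hθ.specNorm_Vmat_le ℓ) (hθ'.specNorm_Vmat_le ℓ) hVV' (gvec φ α σv σw θ x ℓ)
    (gvec φ α σv σw θ' x ℓ) δ δ'
  have hWW' : specNorm ((Wmat θ ℓ)ᵀ - (Wmat θ' ℓ)ᵀ) ≤ Δ := by
    rw [← transpose_sub, specNorm_transpose, Wmat_sub]; exact specNorm_Wmat_le_paramNorm _ _
  rw [backpropMatrix_mulVec, backpropMatrix_mulVec]
  refine (l2norm_mulVec_sub_mulVec_le hWW'
    ((specNorm_transpose _).le.trans (hθ'.specNorm_Wmat_le ℓ)) u u').trans ?_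
  calc Δ * l2norm u + 3 * Real.sqrt n * l2norm (u - u')
      ≤ Δ * (Cφ * (3 * Real.sqrt n * l2norm δ)) + 3 * Real.sqrt n * (Cφ *
        (3 * Real.sqrt n * l2norm (gvec φ α σv σw θ x ℓ - gvec φ α σv σw θ' x ℓ) * l2norm δ +
          Δ * l2norm δ + 3 * Real.sqrt n * l2norm (δ - δ'))) := by gcongr
    _ = _ := by
        have hsn : (n : ℝ) = Real.sqrt n * Real.sqrt n :=
          (Real.mul_self_sqrt (Nat.cast_nonneg n)).symm
        set s := Real.sqrt n
        rw [hsn]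
        ring

theorem l2norm_deltaAux_le (hα : 0 ≤ α) (hσv : 0 ≤ σv) (hσw : 0 ≤ σw) (hCφ : 0 ≤ Cφ)
    (hφ' : ∀ z, |deriv φ z| ≤ Cφ) (hn : 0 < n) (hθ : SpectralBounds θ) (k : ℕ) :
    l2norm (deltaAux φ α σv σw θ x k) ≤ 2 * σw * (1 + 9 * (α * σv * σw * Cφ)) ^ k := by
  have hs : 0 < Real.sqrt n := Real.sqrt_pos.2 (by exact_mod_cast hn)
  have h0 : l2norm (deltaAux φ α σv σw θ x 0) ≤ 2 * σw := by
    rw [deltaAux, l2norm_smul, abs_of_nonneg (by positivity)]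
    calc σw / Real.sqrt n * l2norm (wOut θ) ≤ σw / Real.sqrt n * (2 * Real.sqrt n) := by
          gcongr; exact hθ.1
      _ = 2 * σw := by field_simp
  have h := le_pow_mul_add_of_le_mul_add (a := fun k => l2norm (deltaAux φ α σv σw θ x k))
    (ρ := 1 + 9 * (α * σv * σw * Cφ)) (le_add_of_nonneg_right (by positivity)) le_rfl h0
    (fun j => ?_) k
  · linarith
  · rw [deltaAux_succ, mul_zero, add_zero]
    refine (l2norm_add_le _ _).trans ?_
    rw [l2norm_smul, abs_of_nonneg (by positivity)]
    calc l2norm (deltaAux φ α σv σw θ x j) + α * σw * σv / n *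
          l2norm (backpropMatrix φ α σv σw θ x (L - j) *ᵥ deltaAux φ α σv σw θ x j)
        ≤ l2norm (deltaAux φ α σv σw θ x j) + α * σw * σv / n *
          (9 * n * Cφ * l2norm (deltaAux φ α σv σw θ x j)) := by
          gcongr; exact l2norm_backpropMatrix_mulVec_le hCφ hφ' hθ _ _
      _ = (1 + 9 * (α * σv * σw * Cφ)) * l2norm (deltaAux φ α σv σw θ x j) := by
          field_simp

theorem l2norm_deltaAux_succ_sub_le {G D : ℝ} (hα : 0 ≤ α) (hσv : 0 ≤ σv) (hσw : 0 ≤ σw)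
    (hCφ : 0 ≤ Cφ) (hφ' : ∀ z, |deriv φ z| ≤ Cφ)
    (hφ'_lip : ∀ z z', |deriv φ z - deriv φ z'| ≤ Cφ * |z - z'|) (hn : 0 < n)
    (hθ : SpectralBounds θ) (hθ' : SpectralBounds θ') {k : ℕ}
    (hg : l2norm (gvec φ α σv σw θ x (L - k) - gvec φ α σv σw θ' x (L - k)) ≤
      G * paramNorm (θ - θ'))
    (hδ : l2norm (deltaAux φ α σv σw θ x k) ≤ D) :
    l2norm (deltaAux φ α σv σw θ x (k + 1) - deltaAux φ α σv σw θ' x (k + 1)) ≤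
      (1 + 9 * (α * σv * σw * Cφ)) *
          l2norm (deltaAux φ α σv σw θ x k - deltaAux φ α σv σw θ' x k) +
        α * σv * σw * Cφ * (6 + 9 * G) * D * paramNorm (θ - θ') := by
  have hs : 1 ≤ Real.sqrt n := Real.one_le_sqrt.2 (by exact_mod_cast hn)
  set Δ := paramNorm (θ - θ')
  have hΔ : 0 ≤ Δ := paramNorm_nonneg _
  have hD : 0 ≤ D := (l2norm_nonneg _).trans hδ
  have hGΔ : 0 ≤ G * Δ := (l2norm_nonneg _).trans hg
  set e := l2norm (deltaAux φ α σv σw θ x k - deltaAux φ α σv σw θ' x k)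
  have hsplit : deltaAux φ α σv σw θ x (k + 1) - deltaAux φ α σv σw θ' x (k + 1) =
      (deltaAux φ α σv σw θ x k - deltaAux φ α σv σw θ' x k) + (α * σw * σv / n) •
        (backpropMatrix φ α σv σw θ x (L - k) *ᵥ deltaAux φ α σv σw θ x k -
          backpropMatrix φ α σv σw θ' x (L - k) *ᵥ deltaAux φ α σv σw θ' x k) := by
    rw [deltaAux_succ, deltaAux_succ, smul_sub]; abel
  rw [hsplit]
  refine (l2norm_add_le _ _).trans ?_
  rw [l2norm_smul, abs_of_nonneg (by positivity)]
  have h6 : α * σv * σw * Cφ * 6 * D * Δ / Real.sqrt n ≤ α * σv * σw * Cφ * 6 * D * Δ :=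
    div_le_self (by positivity) hs
  have := l2norm_nonneg (deltaAux φ α σv σw θ x k)
  calc e + α * σw * σv / n * l2norm (backpropMatrix φ α σv σw θ x (L - k) *ᵥ
        deltaAux φ α σv σw θ x k - backpropMatrix φ α σv σw θ' x (L - k) *ᵥ
          deltaAux φ α σv σw θ' x k)
      ≤ e + α * σw * σv / n * (Cφ * (6 * Real.sqrt n * Δ * D + 9 * n * (G * Δ) * D +
        9 * n * e)) := by
        gcongr
        exact (l2norm_backpropMatrix_mulVec_sub_le hCφ hφ' hφ'_lip hθ hθ' _ _ _).trans
          (by gcongr)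
    _ = (1 + 9 * (α * σv * σw * Cφ)) * e + α * σv * σw * Cφ * 9 * G * D * Δ +
        α * σv * σw * Cφ * 6 * D * Δ / Real.sqrt n := by
        have hsn : (n : ℝ) = Real.sqrt n * Real.sqrt n :=
          (Real.mul_self_sqrt (Nat.cast_nonneg n)).symm
        set s := Real.sqrt n
        rw [hsn]
        field_simp
        ring
    _ ≤ _ := by linarith

theorem l2norm_deltaAux_sub_le {G : ℝ} (hG : 0 ≤ G) (hα : 0 ≤ α) (hσv : 0 ≤ σv)
    (hσw : 0 ≤ σw) (hCφ : 0 ≤ Cφ) (hφ' : ∀ z, |deriv φ z| ≤ Cφ)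
    (hφ'_lip : ∀ z z', |deriv φ z - deriv φ z'| ≤ Cφ * |z - z'|) (hn : 0 < n)
    (hθ : SpectralBounds θ) (hθ' : SpectralBounds θ')
    (hg : ∀ ℓ ≤ L, l2norm (gvec φ α σv σw θ x ℓ - gvec φ α σv σw θ' x ℓ) ≤
      G * paramNorm (θ - θ')) (k : ℕ) :
    l2norm (deltaAux φ α σv σw θ x k - deltaAux φ α σv σw θ' x k) ≤
      (1 + 9 * (α * σv * σw * Cφ)) ^ k *
        (σw + k * (2 * σw * (α * σv * σw * Cφ * (6 + 9 * G)))) * paramNorm (θ - θ') := by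
  have hs : 1 ≤ Real.sqrt n := Real.one_le_sqrt.2 (by exact_mod_cast hn)
  set Δ := paramNorm (θ - θ')
  have hΔ : 0 ≤ Δ := paramNorm_nonneg _
  have h0 : l2norm (deltaAux φ α σv σw θ x 0 - deltaAux φ α σv σw θ' x 0) ≤ σw * Δ := by
    rw [deltaAux, deltaAux, ← smul_sub, wOut_sub, l2norm_smul, abs_of_nonneg (by positivity)]
    exact mul_le_mul (div_le_self hσw hs) (l2norm_wOut_le_paramNorm _) (l2norm_nonneg _) hσw
  have h := le_pow_mul_add_of_le_mul_add
    (a := fun k => l2norm (deltaAux φ α σv σw θ x k - deltaAux φ α σv σw θ' x k))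
    (ρ := 1 + 9 * (α * σv * σw * Cφ)) (c := 2 * σw * (α * σv * σw * Cφ * (6 + 9 * G)) * Δ)
    (le_add_of_nonneg_right (by positivity)) (by positivity) h0 (fun j => ?_) k
  · calc _ ≤ _ := h
      _ = _ := by ring
  · refine (l2norm_deltaAux_succ_sub_le hα hσv hσw hCφ hφ' hφ'_lip hn hθ hθ'
      (hg (L - j) (Nat.sub_le L j)) (l2norm_deltaAux_le hα hσv hσw hCφ hφ' hn hθ j)).trans
      (le_of_eq ?_)
    ring

theorem l2norm_deltaVec_le (hα : 0 ≤ α) (hσv : 0 ≤ σv) (hσw : 0 ≤ σw) (hCφ : 0 ≤ Cφ)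
    (hφ' : ∀ z, |deriv φ z| ≤ Cφ) (hn : 0 < n) (hθ : SpectralBounds θ) (ℓ : ℕ) :
    l2norm (deltaVec φ α σv σw θ x ℓ) ≤ 2 * σw * (1 + 9 * (α * σv * σw * Cφ)) ^ L :=
  (l2norm_deltaAux_le hα hσv hσw hCφ hφ' hn hθ (L - ℓ)).trans (mul_le_mul_of_nonneg_left
    (pow_le_pow_right₀ (le_add_of_nonneg_right (by positivity)) (Nat.sub_le L ℓ)) (by positivity))

theorem l2norm_deltaVec_sub_le {G : ℝ} (hG : 0 ≤ G) (hα : 0 ≤ α) (hσv : 0 ≤ σv)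
    (hσw : 0 ≤ σw) (hCφ : 0 ≤ Cφ) (hφ' : ∀ z, |deriv φ z| ≤ Cφ)
    (hφ'_lip : ∀ z z', |deriv φ z - deriv φ z'| ≤ Cφ * |z - z'|) (hn : 0 < n)
    (hθ : SpectralBounds θ) (hθ' : SpectralBounds θ')
    (hg : ∀ ℓ ≤ L, l2norm (gvec φ α σv σw θ x ℓ - gvec φ α σv σw θ' x ℓ) ≤
      G * paramNorm (θ - θ')) (ℓ : ℕ) :
    l2norm (deltaVec φ α σv σw θ x ℓ - deltaVec φ α σv σw θ' x ℓ) ≤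
      (1 + 9 * (α * σv * σw * Cφ)) ^ L *
        (σw + L * (2 * σw * (α * σv * σw * Cφ * (6 + 9 * G)))) * paramNorm (θ - θ') :=
  (l2norm_deltaAux_sub_le hG hα hσv hσw hCφ hφ' hφ'_lip hn hθ hθ' hg (L - ℓ)).trans
    (mul_le_mul_of_nonneg_right (pow_mul_add_le_pow_mul_add
      (le_add_of_nonneg_right (by positivity)) hσw (by positivity) (Nat.sub_le L ℓ))
      (paramNorm_nonneg _))

theorem l2norm_gammaVec_sub_le {G D E : ℝ} (hα : 0 ≤ α) (hσv : 0 ≤ σv) (hσw : 0 ≤ σw)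
    (hCφ : 0 ≤ Cφ) (hφ' : ∀ z, |deriv φ z| ≤ Cφ)
    (hφ'_lip : ∀ z z', |deriv φ z - deriv φ z'| ≤ Cφ * |z - z'|) (hn : 0 < n)
    (hθ : SpectralBounds θ) (hθ' : SpectralBounds θ') {ℓ : ℕ}
    (hg : l2norm (gvec φ α σv σw θ x ℓ - gvec φ α σv σw θ' x ℓ) ≤ G * paramNorm (θ - θ'))
    (hδ : l2norm (deltaVec φ α σv σw θ x ℓ) ≤ D)
    (hdδ : l2norm (deltaVec φ α σv σw θ x ℓ - deltaVec φ α σv σw θ' x ℓ) ≤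
      E * paramNorm (θ - θ')) :
    l2norm (gammaVec φ α σv σw θ x ℓ - gammaVec φ α σv σw θ' x ℓ) ≤
      α * σv * σw * Cφ * (3 * G * D + D + 3 * E) * paramNorm (θ - θ') := by
  have hs : 1 ≤ Real.sqrt n := Real.one_le_sqrt.2 (by exact_mod_cast hn)
  set Δ := paramNorm (θ - θ')
  have hΔ : 0 ≤ Δ := paramNorm_nonneg _
  have hD : 0 ≤ D := (l2norm_nonneg _).trans hδ
  have hGΔ : 0 ≤ G * Δ := (l2norm_nonneg _).trans hg
  have hVV' : specNorm (Vmat θ ℓ - Vmat θ' ℓ) ≤ Δ := by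
    rw [Vmat_sub]; exact specNorm_Vmat_le_paramNorm _ _
  have hu := l2norm_diagonal_mul_transpose_mulVec_sub_le hCφ hφ' hφ'_lip
    (hθ.specNorm_Vmat_le ℓ) (hθ'.specNorm_Vmat_le ℓ) hVV' (gvec φ α σv σw θ x ℓ)
    (gvec φ α σv σw θ' x ℓ) (deltaVec φ α σv σw θ x ℓ) (deltaVec φ α σv σw θ' x ℓ)
  rw [gammaVec, gammaVec, ← smul_sub, l2norm_smul, abs_of_nonneg (by positivity)]
  have hδ0 := l2norm_nonneg (deltaVec φ α σv σw θ x ℓ)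
  calc α * σv * σw / Real.sqrt n * l2norm _
      ≤ α * σv * σw / Real.sqrt n *
        (Cφ * (3 * Real.sqrt n * (G * Δ) * D + Δ * D + 3 * Real.sqrt n * (E * Δ))) := by
        gcongr; exact hu.trans (by gcongr)
    _ = α * σv * σw * Cφ * (3 * G * D + 3 * E) * Δ +
        α * σv * σw * Cφ * D * Δ / Real.sqrt n := by field_simp; ring
    _ ≤ _ := by
        have := div_le_self (by positivity : 0 ≤ α * σv * σw * Cφ * D * Δ) hs
        linarith

theorem l2norm_zVec_sub_le (hα : 0 ≤ α) (hσv : 0 ≤ σv) (hCφ : 0 ≤ Cφ)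
    (hφ_lip : ∀ z z', |φ z - φ z'| ≤ Cφ * |z - z'|) (ℓ : ℕ) :
    l2norm (zVec φ α σv σw θ x ℓ - zVec φ α σv σw θ' x ℓ) ≤
      α * σv * Cφ * l2norm (gvec φ α σv σw θ x ℓ - gvec φ α σv σw θ' x ℓ) := by
  have hz : zVec φ α σv σw θ x ℓ - zVec φ α σv σw θ' x ℓ = (α * σv) •
      ((fun i => φ (gvec φ α σv σw θ x ℓ i)) - fun i => φ (gvec φ α σv σw θ' x ℓ i)) := by
    ext i; simp [zVec, mul_sub]
  rw [hz, l2norm_smul, abs_of_nonneg (by positivity), mul_assoc (α * σv) Cφ]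
  exact mul_le_mul_of_nonneg_left (l2norm_comp_sub_comp_le hCφ hφ_lip _ _) (by positivity)

end Backward

theorem gamma_z_parameter_lipschitz_general
    (L d : ℕ)
    (α σv σw Cφ B : ℝ) (hα : 0 < α) (hσv : 0 < σv) (hσw : 0 < σw) (hCφ : 0 < Cφ)
    (hB : 0 ≤ B) :
    ∃ K : ℝ, 0 < K ∧
      ∀ (n : ℕ) (φ : ℝ → ℝ), Differentiable ℝ φ →
        (∀ z : ℝ, |φ z| ≤ Cφ * |z|) → (∀ z : ℝ, |deriv φ z| ≤ Cφ) →
        (∀ z z' : ℝ, |φ z - φ z'| ≤ Cφ * |z - z'|) →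
        (∀ z z' : ℝ, |deriv φ z - deriv φ z'| ≤ Cφ * |z - z'|) →
        ∀ x : Fin d → ℝ, l2norm x ≤ B →
        ∀ θ θ' : Params n L d, SpectralBounds θ → SpectralBounds θ' →
          ∀ ℓ : ℕ, 1 ≤ ℓ → ℓ ≤ L →
            l2norm (gammaVec φ α σv σw θ x ℓ - gammaVec φ α σv σw θ' x ℓ) ≤
                K * paramNorm (θ - θ') ∧
            l2norm (zVec φ α σv σw θ x ℓ - zVec φ α σv σw θ' x ℓ) ≤
                K * paramNorm (θ - θ') := by
  have hP0 : 0 ≤ α * σv * σw * Cφ := by positivity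
  set P := α * σv * σw * Cφ
  have hG0 : 0 ≤ σw * (3 * B * (1 + 9 * P) ^ L +
      3 * ((1 + 9 * P) ^ L * (B + L * (18 * P * B)))) := by positivity
  set G := σw * (3 * B * (1 + 9 * P) ^ L + 3 * ((1 + 9 * P) ^ L * (B + L * (18 * P * B))))
  set D := 2 * σw * (1 + 9 * P) ^ L
  set E := (1 + 9 * P) ^ L * (σw + L * (2 * σw * (P * (6 + 9 * G))))
  have hγ0 : 0 ≤ P * (3 * G * D + D + 3 * E) := by positivity
  have hz0 : 0 ≤ α * σv * Cφ * G := by positivity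
  refine ⟨P * (3 * G * D + D + 3 * E) + α * σv * Cφ * G + 1, by positivity, ?_⟩
  intro n φ _ hφ hφ' hφ_lip hφ'_lip x hx θ θ' hθ hθ' ℓ _ hℓ
  have hΔ := paramNorm_nonneg (θ - θ')
  rcases n.eq_zero_or_pos with rfl | hn
  · simp only [l2norm_of_isEmpty]; constructor <;> positivity
  have hg : ∀ ℓ ≤ L, l2norm (gvec φ α σv σw θ x ℓ - gvec φ α σv σw θ' x ℓ) ≤
      G * paramNorm (θ - θ') := fun ℓ hℓ =>
    l2norm_gvec_sub_le_of_le hα.le hσv.le hσw.le hCφ.le hB hφ hφ_lip hn hx hθ hθ' hℓ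
  have hγ := l2norm_gammaVec_sub_le hα.le hσv.le hσw.le hCφ.le hφ' hφ'_lip hn hθ hθ' (hg ℓ hℓ)
    (l2norm_deltaVec_le hα.le hσv.le hσw.le hCφ.le hφ' hn hθ ℓ)
    (l2norm_deltaVec_sub_le hG0 hα.le hσv.le hσw.le hCφ.le hφ' hφ'_lip hn hθ hθ' hg ℓ)
  have hz := (l2norm_zVec_sub_le hα.le hσv.le hCφ.le hφ_lip (θ := θ) (θ' := θ') (x := x) ℓ).trans
    (mul_le_mul_of_nonneg_left (hg ℓ hℓ) (by positivity))
  rw [← mul_assoc] at hz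
  exact ⟨hγ.trans (mul_le_mul_of_nonneg_right (by linarith) hΔ),
    hz.trans (mul_le_mul_of_nonneg_right (by linarith) hΔ)⟩

/-- **Auxiliary parameter-Lipschitz bounds for γ and z.** There is a constant K depending
only on L, α, σ_v, σ_w, C_φ, B and d (not on n) such that for all θ, θ̃ satisfying the
spectral bounds and every ℓ ∈ {1,…,L}:
‖γ^{(ℓ)}(θ) − γ^{(ℓ)}(θ̃)‖₂ ≤ K‖θ − θ̃‖₂ and ‖z^{(ℓ)}(θ) − z^{(ℓ)}(θ̃)‖₂ ≤ K‖θ − θ̃‖₂. -/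
theorem gamma_z_parameter_lipschitz
    (L d : ℕ) (hL : 1 ≤ L) (hd : 1 ≤ d)
    (α σv σw Cφ B : ℝ) (hα : 0 < α) (hσv : 0 < σv) (hσw : 0 < σw) (hCφ : 0 < Cφ)
    (hB : 0 ≤ B) :
    ∃ K : ℝ, 0 < K ∧
      ∀ (n : ℕ) (φ : ℝ → ℝ), Differentiable ℝ φ →
        (∀ z : ℝ, |φ z| ≤ Cφ * |z|) → (∀ z : ℝ, |deriv φ z| ≤ Cφ) →
        (∀ z z' : ℝ, |φ z - φ z'| ≤ Cφ * |z - z'|) →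
        (∀ z z' : ℝ, |deriv φ z - deriv φ z'| ≤ Cφ * |z - z'|) →
        ∀ x : Fin d → ℝ, l2norm x ≤ B →
        ∀ θ θ' : Params n L d, SpectralBounds θ → SpectralBounds θ' →
          ∀ ℓ : ℕ, 1 ≤ ℓ → ℓ ≤ L →
            l2norm (gammaVec φ α σv σw θ x ℓ - gammaVec φ α σv σw θ' x ℓ) ≤
                K * paramNorm (θ - θ') ∧
            l2norm (zVec φ α σv σw θ x ℓ - zVec φ α σv σw θ' x ℓ) ≤
                K * paramNorm (θ - θ') :=
  gamma_z_parameter_lipschitz_general L d α σv σw Cφ B hα hσv hσw hCφ hB
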